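/- Let H be a complex Hilbert space and let M_1, M_2, N_1, N_2 be closed subspaces of H such that M_1 ⊥ M_2, M_1 ⊥ N_2, M_2 ⊥ N_1 and N_1 ⊥ N_2. Then c(M_1 ⊕ M_2, N_1 ⊕ N_2) = max( c(M_1, N_1), c(M_2, N_2) ), where M_1 ⊕ M_2 and N_1 ⊕ N_2 denote the (closed) sums of the respective orthogonal subspaces. -/

import Mathlib

/-!
Since `M₁ ⊔ N₁ ⟂ M₂ ⊔ N₂`, the projections onto the orthogonal sums split as
`P_{M₁ ⊔ M₂} = P_{M₁} + P_{M₂}` (and likewise for `N` and for the intersections, where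
`(M₁ ⊔ M₂) ⊓ (N₁ ⊔ N₂) = (M₁ ⊓ N₁) ⊔ (M₂ ⊓ N₂)`), and the cross terms `P_{M₁} P_{N₂}`,
`P_{M₂} P_{N₁}` vanish. Hence `P_{M₁ ⊔ M₂} P_{N₁ ⊔ N₂} - P_{(M₁ ⊔ M₂) ⊓ (N₁ ⊔ N₂)} = T₁ + T₂`
with `Tᵢ = P_{Mᵢ} P_{Nᵢ} - P_{Mᵢ ⊓ Nᵢ}`. Each `Tᵢ` maps into `Mᵢ` and factors through `P_{Nᵢ}`,
so by Pythagoras on both sides `‖(T₁ + T₂) x‖² ≤ ‖T₁‖² ‖P_{N₁} x‖² + ‖T₂‖² ‖P_{N₂} x‖²`,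
which gives `‖T₁ + T₂‖ = max ‖T₁‖ ‖T₂‖`.
-/

/-- The orthogonal projection onto a subspace `K` of a complex inner product space,
as a bounded operator on the whole space (junk value `0` if `K` does not admit an
orthogonal projection; for a closed subspace of a Hilbert space it is the genuine
orthogonal projection). -/
noncomputable def proj {H : Type*} [NormedAddCommGroup H] [InnerProductSpace ℂ H]
    (K : Submodule ℂ H) : H →L[ℂ] H :=
  letI := Classical.propDecidable (K.HasOrthogonalProjection)
  if h : K.HasOrthogonalProjection then
    haveI := h
    K.subtypeL.comp (K.orthogonalProjection)
  else 0

/-- The cosine of the Friedrichs angle between two (closed) subspaces `M`, `N`: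
`c(M,N) = ‖P_M P_N - P_{M ∩ N}‖`. -/
noncomputable def friedrichs {H : Type*} [NormedAddCommGroup H] [InnerProductSpace ℂ H]
    (M N : Submodule ℂ H) : ℝ :=
  ‖proj M * proj N - proj (M ⊓ N)‖

namespace Submodule

variable {𝕜 E : Type*} [RCLike 𝕜] [NormedAddCommGroup E] [InnerProductSpace 𝕜 E]
variable {K₁ K₂ : Submodule 𝕜 E} [K₁.HasOrthogonalProjection] [K₂.HasOrthogonalProjection]

theorem IsOrtho.sub_starProjection_add_mem_orthogonal_sup (h : K₁ ⟂ K₂) (v : E) :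
    v - (K₁.starProjection v + K₂.starProjection v) ∈ (K₁ ⊔ K₂)ᗮ := by
  rw [← inf_orthogonal]
  constructor
  · rw [← sub_sub]
    exact sub_mem (K₁.sub_starProjection_mem_orthogonal v) (h.ge (K₂.starProjection_apply_mem v))
  · rw [add_comm, ← sub_sub]
    exact sub_mem (K₂.sub_starProjection_mem_orthogonal v) (h.le (K₁.starProjection_apply_mem v))

theorem IsOrtho.hasOrthogonalProjection_sup (h : K₁ ⟂ K₂) : (K₁ ⊔ K₂).HasOrthogonalProjection :=
  ⟨fun v => ⟨_, add_mem_sup (K₁.starProjection_apply_mem v) (K₂.starProjection_apply_mem v),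
    h.sub_starProjection_add_mem_orthogonal_sup v⟩⟩

theorem IsOrtho.starProjection_sup [(K₁ ⊔ K₂).HasOrthogonalProjection] (h : K₁ ⟂ K₂) :
    (K₁ ⊔ K₂).starProjection = K₁.starProjection + K₂.starProjection :=
  ContinuousLinearMap.ext fun v => (eq_starProjection_of_mem_orthogonal
    (add_mem_sup (K₁.starProjection_apply_mem v) (K₂.starProjection_apply_mem v))
    (h.sub_starProjection_add_mem_orthogonal_sup v))

theorem IsOrtho.norm_sq_starProjection_add_le (h : K₁ ⟂ K₂) (x : E) :
    ‖K₁.starProjection x‖ ^ 2 + ‖K₂.starProjection x‖ ^ 2 ≤ ‖x‖ ^ 2 := by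
  have := h.hasOrthogonalProjection_sup
  have hsum : K₁.starProjection x + K₂.starProjection x = (K₁ ⊔ K₂).starProjection x := by
    rw [h.starProjection_sup, add_apply]
  rw [sq, sq, ← norm_add_sq_eq_norm_sq_add_norm_sq_of_inner_eq_zero _ _
    (h.inner_eq (K₁.starProjection_apply_mem x) (K₂.starProjection_apply_mem x)), hsum, ← sq]
  gcongr
  exact (K₁ ⊔ K₂).norm_starProjection_apply_le x

theorem sup_inf_sup_eq_of_isOrtho {M₁ M₂ N₁ N₂ : Submodule 𝕜 E} (h : M₁ ⊔ N₁ ⟂ M₂ ⊔ N₂) :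
    (M₁ ⊔ M₂) ⊓ (N₁ ⊔ N₂) = (M₁ ⊓ N₁) ⊔ (M₂ ⊓ N₂) := by
  refine le_antisymm ?_ (sup_le (inf_le_inf le_sup_left le_sup_left)
    (inf_le_inf le_sup_right le_sup_right))
  rintro _ ⟨hxM, hxN⟩
  obtain ⟨m₁, hm₁, m₂, hm₂, rfl⟩ := mem_sup.1 hxM
  obtain ⟨n₁, hn₁, n₂, hn₂, hx⟩ := mem_sup.1 hxN
  have hdiff : m₁ - n₁ = n₂ - m₂ := by
    rw [sub_eq_sub_iff_add_eq_add, ← hx, add_comm]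
  have hzero : m₁ - n₁ = 0 := (disjoint_def.1 h.disjoint) _
    (sub_mem (mem_sup_left hm₁) (mem_sup_right hn₁))
    (hdiff ▸ sub_mem (mem_sup_right hn₂) (mem_sup_left hm₂))
  obtain rfl : m₁ = n₁ := sub_eq_zero.1 hzero
  obtain rfl : n₂ = m₂ := sub_eq_zero.1 (hdiff ▸ hzero)
  exact add_mem_sup ⟨hm₁, hn₁⟩ ⟨hm₂, hn₂⟩

theorem starProjection_mul_sub_starProjection_inf_comp_right (M N : Submodule 𝕜 E)
    [M.HasOrthogonalProjection] [N.HasOrthogonalProjection] [(M ⊓ N).HasOrthogonalProjection] :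
    (M.starProjection * N.starProjection - (M ⊓ N).starProjection) ∘L N.starProjection =
      M.starProjection * N.starProjection - (M ⊓ N).starProjection := by
  rw [← ContinuousLinearMap.mul_def, sub_mul, mul_assoc, N.isIdempotentElem_starProjection.eq,
    ContinuousLinearMap.mul_def (M ⊓ N).starProjection,
    starProjection_comp_starProjection_of_le inf_le_right]

theorem starProjection_mul_sub_starProjection_inf_apply_mem (M N : Submodule 𝕜 E)
    [M.HasOrthogonalProjection] [N.HasOrthogonalProjection] [(M ⊓ N).HasOrthogonalProjection]
    (x : E) : (M.starProjection * N.starProjection - (M ⊓ N).starProjection) x ∈ M :=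
  sub_mem (M.starProjection_apply_mem _) (mem_inf.1 ((M ⊓ N).starProjection_apply_mem x)).1

end Submodule

namespace ContinuousLinearMap

variable {𝕜 E F : Type*} [RCLike 𝕜] [NormedAddCommGroup E] [InnerProductSpace 𝕜 E]
  [NormedAddCommGroup F] [InnerProductSpace 𝕜 F]

theorem norm_add_eq_max_of_isOrtho {A B : E →L[𝕜] F} {V₁ V₂ : Submodule 𝕜 E}
    [V₁.HasOrthogonalProjection] [V₂.HasOrthogonalProjection] (hV : V₁ ⟂ V₂)
    (hA : A ∘L V₁.starProjection = A) (hB : B ∘L V₂.starProjection = B)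
    (hAB : ∀ x, inner 𝕜 (A x) (B x) = 0) :
    ‖A + B‖ = max ‖A‖ ‖B‖ := by
  have pyth (x : E) : ‖(A + B) x‖ ^ 2 = ‖A x‖ ^ 2 + ‖B x‖ ^ 2 := by
    rw [add_apply, sq, sq, sq]
    exact norm_add_sq_eq_norm_sq_add_norm_sq_of_inner_eq_zero _ _ (hAB x)
  refine le_antisymm (opNorm_le_bound _ (by positivity) fun x => ?_)
    (max_le (opNorm_le_bound _ (norm_nonneg _) fun x => ?_)
      (opNorm_le_bound _ (norm_nonneg _) fun x => ?_))
  · refine le_of_pow_le_pow_left₀ two_ne_zero (by positivity) ?_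
    set m := max ‖A‖ ‖B‖
    calc ‖(A + B) x‖ ^ 2 = ‖A (V₁.starProjection x)‖ ^ 2 + ‖B (V₂.starProjection x)‖ ^ 2 := by
          rw [pyth, ← comp_apply, ← comp_apply, hA, hB]
      _ ≤ (‖A‖ * ‖V₁.starProjection x‖) ^ 2 + (‖B‖ * ‖V₂.starProjection x‖) ^ 2 := by
          gcongr <;> exact le_opNorm _ _
      _ ≤ m ^ 2 * (‖V₁.starProjection x‖ ^ 2 + ‖V₂.starProjection x‖ ^ 2) := by
          rw [mul_pow, mul_pow, mul_add]
          gcongr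
          exacts [le_max_left _ _, le_max_right _ _]
      _ ≤ m ^ 2 * ‖x‖ ^ 2 := by gcongr; exact hV.norm_sq_starProjection_add_le x
      _ = (m * ‖x‖) ^ 2 := (mul_pow _ _ _).symm
  · refine le_trans ?_ ((A + B).le_opNorm x)
    refine le_of_pow_le_pow_left₀ two_ne_zero (by positivity) ?_
    rw [pyth]
    exact le_add_of_nonneg_right (sq_nonneg _)
  · refine le_trans ?_ ((A + B).le_opNorm x)
    refine le_of_pow_le_pow_left₀ two_ne_zero (by positivity) ?_
    rw [pyth]
    exact le_add_of_nonneg_left (sq_nonneg _)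

end ContinuousLinearMap

section Friedrichs

open Submodule

variable {H : Type*} [NormedAddCommGroup H] [InnerProductSpace ℂ H]

theorem proj_eq_starProjection (K : Submodule ℂ H) [h : K.HasOrthogonalProjection] :
    proj K = K.starProjection := by
  rw [proj, dif_pos h]
  rfl

theorem friedrichs_sup_eq_max {M₁ M₂ N₁ N₂ : Submodule ℂ H}
    [M₁.HasOrthogonalProjection] [M₂.HasOrthogonalProjection]
    [N₁.HasOrthogonalProjection] [N₂.HasOrthogonalProjection]
    [(M₁ ⊓ N₁).HasOrthogonalProjection] [(M₂ ⊓ N₂).HasOrthogonalProjection]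
    (hMM : M₁ ⟂ M₂) (hMN : M₁ ⟂ N₂) (hNM : M₂ ⟂ N₁) (hNN : N₁ ⟂ N₂) :
    friedrichs (M₁ ⊔ M₂) (N₁ ⊔ N₂) = max (friedrichs M₁ N₁) (friedrichs M₂ N₂) := by
  have hI : M₁ ⊓ N₁ ⟂ M₂ ⊓ N₂ := hMM.mono inf_le_left inf_le_left
  have := hMM.hasOrthogonalProjection_sup
  have := hNN.hasOrthogonalProjection_sup
  have := hI.hasOrthogonalProjection_sup
  have hinf : (M₁ ⊔ M₂) ⊓ (N₁ ⊔ N₂) = (M₁ ⊓ N₁) ⊔ (M₂ ⊓ N₂) := sup_inf_sup_eq_of_isOrtho <|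
    isOrtho_sup_left.2 ⟨isOrtho_sup_right.2 ⟨hMM, hMN⟩, isOrtho_sup_right.2 ⟨hNM.symm, hNN⟩⟩
  simp only [friedrichs, hinf, proj_eq_starProjection]
  rw [hMM.starProjection_sup, hNN.starProjection_sup, hI.starProjection_sup,
    add_mul, mul_add, mul_add,
    ContinuousLinearMap.mul_def M₁.starProjection N₂.starProjection,
    ContinuousLinearMap.mul_def M₂.starProjection N₁.starProjection,
    hMN.starProjection_comp_starProjection, hNM.starProjection_comp_starProjection, add_zero,
    zero_add, add_sub_add_comm]
  exact ContinuousLinearMap.norm_add_eq_max_of_isOrtho hNN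
    (starProjection_mul_sub_starProjection_inf_comp_right M₁ N₁)
    (starProjection_mul_sub_starProjection_inf_comp_right M₂ N₂) fun x => hMM.inner_eq
      (starProjection_mul_sub_starProjection_inf_apply_mem M₁ N₁ x)
      (starProjection_mul_sub_starProjection_inf_apply_mem M₂ N₂ x)

end Friedrichs

theorem stmt11 {H : Type*} [NormedAddCommGroup H] [InnerProductSpace ℂ H] [CompleteSpace H]
    (M₁ M₂ N₁ N₂ : Submodule ℂ H)
    (hM₁ : IsClosed (M₁ : Set H)) (hM₂ : IsClosed (M₂ : Set H))
    (hN₁ : IsClosed (N₁ : Set H)) (hN₂ : IsClosed (N₂ : Set H))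
    (hMM : ∀ x ∈ M₁, ∀ y ∈ M₂, (inner ℂ x y : ℂ) = 0)
    (hMN : ∀ x ∈ M₁, ∀ y ∈ N₂, (inner ℂ x y : ℂ) = 0)
    (hNM : ∀ x ∈ M₂, ∀ y ∈ N₁, (inner ℂ x y : ℂ) = 0)
    (hNN : ∀ x ∈ N₁, ∀ y ∈ N₂, (inner ℂ x y : ℂ) = 0) :
    friedrichs (M₁ ⊔ M₂) (N₁ ⊔ N₂) = max (friedrichs M₁ N₁) (friedrichs M₂ N₂) := by
  have := hM₁.completeSpace_coe
  have := hM₂.completeSpace_coe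
  have := hN₁.completeSpace_coe
  have := hN₂.completeSpace_coe
  have := (hM₁.inter hN₁).completeSpace_coe
  have := (hM₂.inter hN₂).completeSpace_coe
  exact friedrichs_sup_eq_max (Submodule.isOrtho_iff_inner_eq.2 hMM)
    (Submodule.isOrtho_iff_inner_eq.2 hMN) (Submodule.isOrtho_iff_inner_eq.2 hNM)
    (Submodule.isOrtho_iff_inner_eq.2 hNN)
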